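/- arXiv:1305.1139 — 7 statements merged into one kernel-verified Lean document; each statement's English description precedes it below -/
import Mathlib

section
/- Let A be a finite set of positive reals and define Ω_2(A) to be the set of spectral radii of 2×2 matrices with all entries in A. Then |Ω_2(A)| ≥ |A·A|, where A·A = {a·b : a, b ∈ A}. -/
/-!
Fix `a ∈ A`. For `b, c ∈ A` the matrix `!![a, b; c, a]` has eigenvalues `a ± √(bc)`, so its
spectral radius is `a + √(bc)`. As `p ↦ a + √p` is injective on nonnegative reals, distinct
products `bc ∈ A·A` yield distinct elements of `Ω₂(A)`.
-/

/-- Spectral radius of a complex matrix: max modulus of its eigenvalues. -/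
noncomputable def specRad {n : ℕ} (M : Matrix (Fin n) (Fin n) ℂ) : ℝ :=
  sSup ((fun z : ℂ => ‖z‖) '' spectrum ℂ M)

/-- Ω₂(A): set of spectral radii of 2×2 real matrices with entries in A. -/
noncomputable def Omega2 (A : Finset ℝ) : Set ℝ :=
  { r | ∃ M : Matrix (Fin 2) (Fin 2) ℝ,
      (∀ i j, M i j ∈ A) ∧ specRad (M.map (Complex.ofReal ·)) = r }

open Matrix

theorem Matrix.mem_spectrum_fin_two_const_diag_iff {K : Type*} [Field K] (a b c μ : K) :
    μ ∈ spectrum K !![a, b; c, a] ↔ (μ - a) ^ 2 = b * c := by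
  rw [spectrum.mem_iff, isUnit_iff_isUnit_det, isUnit_iff_ne_zero, not_not,
    Algebra.algebraMap_eq_smul_one, one_fin_two, smul_of, of_sub_of]
  simp only [smul_cons, smul_empty, smul_eq_mul, mul_one, mul_zero, cons_sub_cons, empty_sub_empty]
  rw [det_fin_two_of, ← sub_eq_zero (a := (μ - a) ^ 2)]
  ring_nf

theorem Matrix.spectrum_map_ofReal_fin_two_const_diag (a b c : ℝ) (hbc : 0 ≤ b * c) :
    spectrum ℂ (!![a, b; c, a].map (Complex.ofReal ·)) =
      {((a + √(b * c) : ℝ) : ℂ), ((a - √(b * c) : ℝ) : ℂ)} := by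
  have hmap : !![a, b; c, a].map (Complex.ofReal ·) = !![(a : ℂ), b; c, a] := by
    ext i j
    fin_cases i <;> fin_cases j <;> rfl
  have hsqrt : ((√(b * c) : ℝ) : ℂ) ^ 2 = b * c := by
    exact_mod_cast Real.sq_sqrt hbc
  ext μ
  rw [hmap, mem_spectrum_fin_two_const_diag_iff, ← hsqrt, sq_eq_sq_iff_eq_or_eq_neg]
  push_cast
  rw [Set.mem_insert_iff, Set.mem_singleton_iff, sub_eq_iff_eq_add', sub_eq_iff_eq_add',
    ← sub_eq_add_neg]

theorem specRad_map_ofReal_fin_two_const_diag {a : ℝ} (b c : ℝ) (ha : 0 ≤ a)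
    (hbc : 0 ≤ b * c) :
    specRad (!![a, b; c, a].map (Complex.ofReal ·)) = a + √(b * c) := by
  have hsqrt : 0 ≤ √(b * c) := Real.sqrt_nonneg _
  rw [specRad, spectrum_map_ofReal_fin_two_const_diag a b c hbc, Set.image_pair, csSup_pair,
    Complex.norm_real, Complex.norm_real, Real.norm_of_nonneg (by positivity)]
  exact max_eq_left (abs_le.mpr ⟨by linarith, by linarith⟩)

theorem finite_omega2 (A : Finset ℝ) : (Omega2 A).Finite := by
  have hmat : {M : Matrix (Fin 2) (Fin 2) ℝ | ∀ i j, M i j ∈ A}.Finite :=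
    Set.Finite.pi' fun _ => Set.Finite.pi' fun _ => A.finite_toSet
  refine (hmat.image fun M => specRad (M.map (Complex.ofReal ·))).subset ?_
  rintro r ⟨M, hM, rfl⟩
  exact ⟨M, hM, rfl⟩

theorem add_sqrt_mul_mem_omega2 {A : Finset ℝ} {a b c : ℝ} (ha : a ∈ A) (hb : b ∈ A)
    (hc : c ∈ A) (ha₀ : 0 ≤ a) (hbc : 0 ≤ b * c) : a + √(b * c) ∈ Omega2 A := by
  refine ⟨!![a, b; c, a], fun i j => ?_, specRad_map_ofReal_fin_two_const_diag b c ha₀ hbc⟩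
  fin_cases i <;> fin_cases j <;> assumption

theorem stmt3 (A : Finset ℝ) (hApos : ∀ x ∈ A, 0 < x) :
    (Finset.image₂ (· * ·) A A).card ≤ (Omega2 A).ncard := by
  obtain rfl | ⟨a, ha⟩ := A.eq_empty_or_nonempty
  · simp
  have hAA_nonneg : ∀ p ∈ Finset.image₂ (· * ·) A A, 0 ≤ p := by
    intro p hp
    obtain ⟨b, hb, c, hc, rfl⟩ := Finset.mem_image₂.mp hp
    exact (mul_pos (hApos b hb) (hApos c hc)).le
  rw [← Set.ncard_coe_finset]
  refine Set.ncard_le_ncard_of_injOn (fun p => a + √p) (fun p hp => ?_) (fun p hp q hq hpq => ?_)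
    (finite_omega2 A)
  · obtain ⟨b, hb, c, hc, rfl⟩ := Finset.mem_image₂.mp hp
    exact add_sqrt_mul_mem_omega2 ha hb hc (hApos a ha).le (hAA_nonneg _ hp)
  · exact (Real.sqrt_inj (hAA_nonneg p hp) (hAA_nonneg q hq)).mp (add_left_cancel hpq)
end

section
/- Let A be a finite set of natural numbers (positive integers), let c be a natural number that is not a perfect square, and suppose A ∩ c*A is nonempty, where c*A = {c·a : a ∈ A}. Then |Ω_2(A)| ≥ |A| · |A ∩ c*A|, where Ω_2(A) is the set of spectral radii of 2×2 matrices with entries in A. -/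
/-- Ω₂(A): set of spectral radii of 2×2 matrices with entries in A ⊆ ℕ. -/
noncomputable def Omega2N (A : Finset ℕ) : Set ℝ :=
  { r | ∃ M : Matrix (Fin 2) (Fin 2) ℕ,
      (∀ i j, M i j ∈ A) ∧ specRad (M.map (Nat.cast : ℕ → ℂ)) = r }

/-!
For `a, b ∈ A` with `c * b ∈ A`, the matrix `!![a, b; c * b, a]` has eigenvalues `a ± √c * b`,
so its spectral radius is `a + √c * b`. Since `√c` is irrational, distinct pairs `(a, b)` give
distinct spectral radii, and the pairs are counted by `|A| * |A ∩ c * A|` because `b ↦ c * b`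
is injective.
-/

theorem Matrix.spectrum_fin_two_of_mul_self {K : Type*} [Field K] (a b s : K) :
    spectrum K !![a, b; s * s * b, a] = {a + s * b, a - s * b} := by
  ext z
  have hdet : (algebraMap K (Matrix (Fin 2) (Fin 2) K) z - !![a, b; s * s * b, a]).det
      = (z - (a + s * b)) * (z - (a - s * b)) := by
    simp only [Matrix.det_fin_two, Matrix.sub_apply, Matrix.algebraMap_matrix_apply,
      Algebra.algebraMap_self, RingHom.id_apply, Matrix.of_apply, Matrix.cons_val',
      Matrix.cons_val_zero, Matrix.cons_val_one, Matrix.cons_val_fin_one, Fin.isValue,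
      zero_ne_one, one_ne_zero, ↓reduceIte]
    ring
  rw [spectrum.mem_iff, Matrix.isUnit_iff_isUnit_det, isUnit_iff_ne_zero, not_not, hdet,
    mul_eq_zero, sub_eq_zero, sub_eq_zero, Set.mem_insert_iff, Set.mem_singleton_iff]

theorem specRad_fin_two_of_mul_self {a b s : ℝ} (ha : 0 ≤ a) (hsb : 0 ≤ s * b) :
    specRad !![(a : ℂ), b; s * s * b, a] = a + s * b := by
  rw [specRad, Matrix.spectrum_fin_two_of_mul_self, Set.image_pair, csSup_pair,
    ← Complex.ofReal_mul, ← Complex.ofReal_add, ← Complex.ofReal_sub, Complex.norm_real,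
    Complex.norm_real, Real.norm_of_nonneg (by positivity), Real.norm_eq_abs, sup_eq_left, abs_le]
  constructor <;> linarith

theorem Irrational.ratCast_add_mul_injective {x : ℝ} (hx : Irrational x) :
    Function.Injective fun p : ℚ × ℚ => (p.1 : ℝ) + x * p.2 := by
  rintro ⟨a, b⟩ ⟨a', b'⟩ h
  simp only at h
  obtain rfl : b = b' := by
    by_contra hb
    apply (hx.mul_ratCast (sub_ne_zero.mpr hb)).ne_rat (a' - a)
    push_cast
    linear_combination h
  simpa using h

theorem Irrational.natCast_add_mul_injective {x : ℝ} (hx : Irrational x) :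
    Function.Injective fun p : ℕ × ℕ => (p.1 : ℝ) + x * p.2 :=
  hx.ratCast_add_mul_injective.comp <|
    Prod.map_injective.mpr ⟨Nat.cast_injective, Nat.cast_injective⟩

theorem Omega2N_finite (A : Finset ℕ) : (Omega2N A).Finite := by
  refine (Set.finite_range fun M : Matrix (Fin 2) (Fin 2) A =>
    specRad (M.map fun x => ((x : ℕ) : ℂ))).subset ?_
  rintro r ⟨M, hM, rfl⟩
  exact ⟨fun i j => ⟨M i j, hM i j⟩, rfl⟩

theorem add_sqrt_mul_mem_Omega2N {A : Finset ℕ} {a b c : ℕ} (ha : a ∈ A) (hb : b ∈ A)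
    (hcb : c * b ∈ A) : (a : ℝ) + √c * b ∈ Omega2N A := by
  refine ⟨!![a, b; c * b, a], fun i j => by fin_cases i <;> fin_cases j <;> assumption, ?_⟩
  have hc : ((√c : ℝ) : ℂ) * (√c : ℝ) = c := by
    rw [← Complex.ofReal_mul, Real.mul_self_sqrt c.cast_nonneg, Complex.ofReal_natCast]
  have hmap : !![a, b; c * b, a].map (Nat.cast : ℕ → ℂ)
      = !![((a : ℝ) : ℂ), ((b : ℝ) : ℂ); (√c : ℝ) * (√c : ℝ) * ((b : ℝ) : ℂ), ((a : ℝ) : ℂ)] := by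
    rw [hc]
    ext i j
    fin_cases i <;> fin_cases j <;> simp
  rw [hmap, specRad_fin_two_of_mul_self (by positivity) (by positivity)]

theorem Finset.card_inter_image_mul {M : Type*} [Mul M] [Zero M] [IsLeftCancelMulZero M]
    [DecidableEq M] (A : Finset M) {c : M} (hc : c ≠ 0) :
    (A ∩ A.image (c * ·)).card = (A.filter fun b => c * b ∈ A).card := by
  rw [← Finset.card_image_of_injective (A.filter fun b => c * b ∈ A) (mul_right_injective₀ hc)]
  congr 1
  ext x
  simp only [Finset.mem_inter, Finset.mem_image, Finset.mem_filter]
  constructor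
  · rintro ⟨hx, b, hb, rfl⟩
    exact ⟨b, ⟨hb, hx⟩, rfl⟩
  · rintro ⟨b, ⟨hb, hx⟩, rfl⟩
    exact ⟨hx, b, hb, rfl⟩

theorem stmt6_general (A : Finset ℕ) (c : ℕ)
    (hc : ¬ IsSquare c) :
    A.card * (A ∩ A.image (c * ·)).card ≤ (Omega2N A).ncard := by
  have hc0 : c ≠ 0 := by
    rintro rfl
    exact hc .zero
  set pairs := A ×ˢ A.filter fun b => c * b ∈ A
  have hinj : Function.Injective fun p : ℕ × ℕ => (p.1 : ℝ) + √c * p.2 :=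
    (irrational_sqrt_natCast_iff.mpr hc).natCast_add_mul_injective
  have hsub : ↑(pairs.image fun p => (p.1 : ℝ) + √c * p.2) ⊆ Omega2N A := by
    simp only [Finset.coe_image, Set.image_subset_iff]
    rintro ⟨a, b⟩ hab
    simp only [pairs, Finset.coe_product, Finset.coe_filter, Set.mem_prod] at hab
    exact add_sqrt_mul_mem_Omega2N hab.1 hab.2.1 hab.2.2
  calc A.card * (A ∩ A.image (c * ·)).card = pairs.card := by
        rw [Finset.card_inter_image_mul A hc0, Finset.card_product]
    _ = (pairs.image fun p => (p.1 : ℝ) + √c * p.2).card :=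
        (Finset.card_image_of_injective _ hinj).symm
    _ ≤ (Omega2N A).ncard := by
        rw [← Set.ncard_coe_finset]
        exact Set.ncard_le_ncard hsub (Omega2N_finite A)

theorem stmt6 (A : Finset ℕ) (hApos : ∀ x ∈ A, 0 < x) (c : ℕ)
    (hc : ¬ IsSquare c) (hne : (A ∩ A.image (c * ·)).Nonempty) :
    A.card * (A ∩ A.image (c * ·)).card ≤ (Omega2N A).ncard :=
  stmt6_general A c hc
end

section
/- Let A be a geometric progression of positive integers whose common ratio is a positive integer that is not a perfect square, with |A| = k ≥ 1. Then |Ω_2(A)| ≥ k(k-1), where Ω_2(A) is the set of spectral radii of 2×2 matrices with entries in A. -/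
theorem Matrix.spectrum_fin_two_of_sq_eq {x y z s : ℂ} (hs : s ^ 2 = y * z) :
    spectrum ℂ !![x, y; z, x] = {x + s, x - s} := by
  ext μ
  have hchar : algebraMap ℂ (Matrix (Fin 2) (Fin 2) ℂ) μ - !![x, y; z, x]
      = !![μ - x, -y; -z, μ - x] := by
    ext i j
    fin_cases i <;> fin_cases j <;> simp [Matrix.algebraMap_matrix_apply]
  have hfactor : (μ - x) * (μ - x) - -y * -z = (μ - (x + s)) * (μ - (x - s)) := by
    linear_combination hs
  rw [spectrum.mem_iff, Matrix.isUnit_iff_isUnit_det, isUnit_iff_ne_zero, not_not, hchar,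
    Matrix.det_fin_two_of, hfactor, mul_eq_zero, sub_eq_zero, sub_eq_zero]
  rfl

theorem specRad_fin_two_of_sq_eq {x s : ℝ} {y z : ℂ} (hx : 0 ≤ x) (hs : 0 ≤ s)
    (hsq : (s : ℂ) ^ 2 = y * z) : specRad !![(x : ℂ), y; z, x] = x + s := by
  rw [specRad, Matrix.spectrum_fin_two_of_sq_eq hsq, Set.image_pair, ← Complex.ofReal_add,
    ← Complex.ofReal_sub, Complex.norm_real, Complex.norm_real, Real.norm_eq_abs,
    Real.norm_eq_abs, csSup_pair, abs_of_nonneg (by linarith : 0 ≤ x + s)]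
  exact sup_eq_left.mpr (abs_le.mpr ⟨by linarith, by linarith⟩)

theorem Irrational.rat_add_rat_mul_inj {t : ℝ} (ht : Irrational t) {p q p' q' : ℚ}
    (h : p + q * t = p' + q' * t) : p = p' ∧ q = q' := by
  have hq : q = q' := by
    by_contra hne
    have hrat : ((q - q' : ℚ) : ℝ) * t = ((p' - p : ℚ) : ℝ) := by push_cast; linarith
    exact (ht.ratCast_mul (sub_ne_zero.mpr hne)).ne_rat _ hrat
  subst hq
  exact ⟨by exact_mod_cast (by linarith : (p : ℝ) = p'), rfl⟩

theorem add_mul_sqrt_mem_Omega2N {A : Finset ℕ} {x y : ℕ} (r : ℕ) (hx : x ∈ A) (hy : y ∈ A)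
    (hry : r * y ∈ A) : (x + y * √r : ℝ) ∈ Omega2N A := by
  refine ⟨!![x, y; r * y, x], fun i j => by fin_cases i <;> fin_cases j <;> assumption, ?_⟩
  have hmap : (!![x, y; r * y, x] : Matrix (Fin 2) (Fin 2) ℕ).map (Nat.cast : ℕ → ℂ)
      = !![((x : ℝ) : ℂ), (y : ℂ); ((r * y : ℕ) : ℂ), ((x : ℝ) : ℂ)] := by
    ext i j; fin_cases i <;> fin_cases j <;> simp
  rw [hmap, specRad_fin_two_of_sq_eq (s := y * √r) (Nat.cast_nonneg x) (by positivity)]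
  rw [← Complex.ofReal_pow, mul_pow, Real.sq_sqrt (Nat.cast_nonneg r)]
  push_cast
  ring

theorem injective_add_mul_sqrt_of_not_isSquare {a r : ℕ} (ha : 0 < a) (hr : ¬ IsSquare r) :
    Function.Injective fun p : ℕ × ℕ => ((a * r ^ p.1 : ℕ) + (a * r ^ p.2 : ℕ) * √r : ℝ) := by
  have hr2 : 2 ≤ r := by
    contrapose! hr
    interval_cases r
    exacts [IsSquare.zero, IsSquare.one]
  have hpow : Function.Injective fun i : ℕ => a * r ^ i :=
    fun _ _ h => Nat.pow_right_injective hr2 (Nat.eq_of_mul_eq_mul_left ha h)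
  rintro ⟨i, j⟩ ⟨i', j'⟩ h
  have hq := (irrational_sqrt_natCast_iff.mpr hr).rat_add_rat_mul_inj
    (p := a * r ^ i) (q := a * r ^ j) (p' := a * r ^ i') (q' := a * r ^ j') (by exact_mod_cast h)
  simp only [Prod.mk.injEq]
  exact ⟨hpow (by exact_mod_cast hq.1), hpow (by exact_mod_cast hq.2)⟩

theorem stmt8_general (a r k : ℕ) (ha : 0 < a) (hrsq : ¬ IsSquare r) :
    k * (k - 1) ≤ (Omega2N ((Finset.range k).image (fun i => a * r ^ i))).ncard := by
  set A := (Finset.range k).image (fun i => a * r ^ i)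
  have hA : ∀ i < k, a * r ^ i ∈ A := fun i hi =>
    Finset.mem_image_of_mem _ (Finset.mem_range.mpr hi)
  calc k * (k - 1) = (↑(Finset.range k ×ˢ Finset.range (k - 1)) : Set (ℕ × ℕ)).ncard := by
        rw [Set.ncard_coe_finset, Finset.card_product, Finset.card_range, Finset.card_range]
    _ ≤ (Omega2N A).ncard := by
      refine Set.ncard_le_ncard_of_injOn _ ?_
        (injective_add_mul_sqrt_of_not_isSquare ha hrsq).injOn (Omega2N_finite A)
      rintro ⟨i, j⟩ hij
      simp only [Finset.coe_product, Finset.coe_range, Set.mem_prod, Set.mem_Iio] at hij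
      refine add_mul_sqrt_mem_Omega2N r (hA i hij.1) (hA j (by omega)) ?_
      rw [show r * (a * r ^ j) = a * r ^ (j + 1) by ring]
      exact hA _ (by omega)

theorem stmt8 (a r k : ℕ) (ha : 0 < a) (hr : 0 < r) (hrsq : ¬ IsSquare r)
    (hk : 1 ≤ k) :
    k * (k - 1) ≤ (Omega2N ((Finset.range k).image (fun i => a * r ^ i))).ncard :=
  stmt8_general a r k ha hrsq
end

section
/- Let M be an n×n matrix with positive real entries such that the first m rows each have row sum a, and rows m+1 through n are all equal to each other with row sum b < a. Let v = (v_1, ..., v_n) be a positive eigenvector of M associated to the spectral radius ρ(M) (Perron vector). Then for all r ≤ m < s, we have v_r > v_s. -/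
/-!
Since the rows below `m` coincide, `(M v)_s` and hence `v_s` is the same for every `s ≥ m`.
If some `v_r` with `r < m` were `≤ v_s`, the minimum of `v` would be attained at a row `r₀ < m`
of sum `a`, so `a ≤ ρ`, while `ρ` is at most the largest row sum `a`. Positivity of the entries
then forces `v` to be constant, so every row sum equals `ρ = a`, contradicting `b < a`.
-/

namespace Matrix

theorem eq_of_mulVec_eq_smul_of_row_eq {ι R : Type*} [Fintype ι] [Semiring R]
    [IsLeftCancelMulZero R] {M : Matrix ι ι R} {v : ι → R} {i i' : ι} {ρ : R} (hρ : ρ ≠ 0)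
    (heig : M *ᵥ v = ρ • v) (hrow : M i = M i') : v i = v i' := by
  have h : (M *ᵥ v) i = (M *ᵥ v) i' := by simp only [mulVec, hrow]
  rw [heig, Pi.smul_apply, Pi.smul_apply, smul_eq_mul, smul_eq_mul] at h
  exact mul_left_cancel₀ hρ h

variable {ι R : Type*} [Fintype ι] [Field R] [LinearOrder R] [IsStrictOrderedRing R]
  {M : Matrix ι ι R} {v : ι → R} {i : ι}

theorem rowSum_mul_le_mulVec (hM : ∀ j, 0 ≤ M i j) (hmin : ∀ j, v i ≤ v j) :
    (∑ j, M i j) * v i ≤ (M *ᵥ v) i := by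
  rw [Finset.sum_mul]
  exact Finset.sum_le_sum fun j _ => mul_le_mul_of_nonneg_left (hmin j) (hM j)

theorem rowSum_mul_lt_mulVec {k : ι} (hM : ∀ j, 0 < M i j) (hmin : ∀ j, v i ≤ v j)
    (hk : v i < v k) : (∑ j, M i j) * v i < (M *ᵥ v) i := by
  rw [Finset.sum_mul]
  exact Finset.sum_lt_sum (fun j _ => mul_le_mul_of_nonneg_left (hmin j) (hM j).le)
    ⟨k, Finset.mem_univ k, mul_lt_mul_of_pos_left hk (hM k)⟩

theorem mulVec_le_rowSum_mul (hM : ∀ j, 0 ≤ M i j) (hmax : ∀ j, v j ≤ v i) :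
    (M *ᵥ v) i ≤ (∑ j, M i j) * v i := by
  rw [Finset.sum_mul]
  exact Finset.sum_le_sum fun j _ => mul_le_mul_of_nonneg_left (hmax j) (hM j)

theorem le_of_mulVec_eq_smul_of_rowSum_le [Nonempty ι] {ρ a : R} (hM : ∀ i j, 0 ≤ M i j)
    (hv : ∀ i, 0 < v i) (heig : M *ᵥ v = ρ • v) (ha : ∀ i, ∑ j, M i j ≤ a) : ρ ≤ a := by
  obtain ⟨i, -, hmax⟩ := Finset.exists_max_image Finset.univ v Finset.univ_nonempty
  refine le_of_mul_le_mul_right ?_ (hv i)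
  calc ρ * v i = (M *ᵥ v) i := by rw [heig, Pi.smul_apply, smul_eq_mul]
    _ ≤ (∑ j, M i j) * v i := mulVec_le_rowSum_mul (hM i) fun j => hmax j (Finset.mem_univ j)
    _ ≤ a * v i := mul_le_mul_of_nonneg_right (ha i) (hv i).le

theorem pos_of_mulVec_eq_smul {ρ : R} (hM : ∀ j, 0 < M i j) (hv : ∀ i, 0 < v i)
    (heig : M *ᵥ v = ρ • v) : 0 < ρ := by
  have hMv : 0 < (M *ᵥ v) i :=
    Finset.sum_pos (fun j _ => mul_pos (hM j) (hv j)) ⟨i, Finset.mem_univ i⟩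
  rw [heig, Pi.smul_apply, smul_eq_mul] at hMv
  exact pos_of_mul_pos_left hMv (hv i).le

theorem rowSum_eq_of_mulVec_eq_smul_of_isMin {ρ a : R} (hM : ∀ i j, 0 < M i j)
    (hv : ∀ i, 0 < v i) (heig : M *ᵥ v = ρ • v) (ha : ∀ i, ∑ j, M i j ≤ a)
    (hmin : ∀ j, v i ≤ v j) (hi : ∑ j, M i j = a) (i' : ι) : ∑ j, M i' j = a := by
  have : Nonempty ι := ⟨i⟩
  have hMv : ∀ i, (M *ᵥ v) i = ρ * v i := fun i => by rw [heig, Pi.smul_apply, smul_eq_mul]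
  have hρa : ρ ≤ a := le_of_mulVec_eq_smul_of_rowSum_le (fun i j => (hM i j).le) hv heig ha
  have hconst : ∀ j, v j = v i := by
    by_contra! ⟨k, hk⟩
    have haρ : a * v i < ρ * v i := by
      rw [← hMv, ← hi]
      exact rowSum_mul_lt_mulVec (hM i) hmin ((hmin k).lt_of_ne' hk)
    linarith [lt_of_mul_lt_mul_right haρ (hv i).le]
  have haρ : a * v i ≤ ρ * v i := by
    rw [← hMv, ← hi]
    exact rowSum_mul_le_mulVec (fun j => (hM i j).le) hmin
  have hρi' : ρ * v i' ≤ (∑ j, M i' j) * v i' := by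
    rw [← hMv]
    exact mulVec_le_rowSum_mul (fun j => (hM i' j).le) fun j => by rw [hconst j, hconst i']
  exact (ha i').antisymm <| (le_of_mul_le_mul_right haρ (hv i)).trans
    (le_of_mul_le_mul_right hρi' (hv i'))

end Matrix

open Matrix in
theorem stmt13_general {n m : ℕ}
    (M : Matrix (Fin n) (Fin n) ℝ) (hpos : ∀ i j, 0 < M i j)
    (a b : ℝ) (hab : b < a)
    (hrowa : ∀ i : Fin n, (i : ℕ) < m → ∑ j, M i j = a)
    (hroweq : ∀ i i' : Fin n, m ≤ (i : ℕ) → m ≤ (i' : ℕ) → ∀ j, M i j = M i' j)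
    (hrowb : ∀ i : Fin n, m ≤ (i : ℕ) → ∑ j, M i j = b)
    (v : Fin n → ℝ) (hv : ∀ i, 0 < v i)
    (heig : M.mulVec v = specRad (M.map (Complex.ofReal ·)) • v) :
    ∀ r s : Fin n, (r : ℕ) < m → m ≤ (s : ℕ) → v s < v r := by
  intro r s hr hs
  have hrow : ∀ i : Fin n, ∑ j, M i j ≤ a := fun i => by
    rcases lt_or_ge (i : ℕ) m with hi | hi
    · exact (hrowa i hi).le
    · exact ((hrowb i hi).trans_lt hab).le
  have htail : ∀ i : Fin n, m ≤ (i : ℕ) → v i = v s := fun i hi =>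
    eq_of_mulVec_eq_smul_of_row_eq (pos_of_mulVec_eq_smul (hpos s) hv heig).ne' heig
      (funext (hroweq i s hi hs))
  by_contra! hrs
  obtain ⟨i₀, -, hi₀⟩ := Finset.exists_min_image Finset.univ v ⟨s, Finset.mem_univ s⟩
  obtain ⟨r₀, hr₀, hmin⟩ : ∃ r₀ : Fin n, (r₀ : ℕ) < m ∧ ∀ j, v r₀ ≤ v j := by
    rcases lt_or_ge (i₀ : ℕ) m with h | h
    · exact ⟨i₀, h, fun j => hi₀ j (Finset.mem_univ j)⟩
    · exact ⟨r, hr, fun j => hrs.trans ((htail i₀ h).symm.trans_le (hi₀ j (Finset.mem_univ j)))⟩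
  have hsa := rowSum_eq_of_mulVec_eq_smul_of_isMin hpos hv heig hrow hmin (hrowa r₀ hr₀) s
  linarith [hrowb s hs]

theorem stmt13 {n m : ℕ} (hm : 0 < m) (hmn : m < n)
    (M : Matrix (Fin n) (Fin n) ℝ) (hpos : ∀ i j, 0 < M i j)
    (a b : ℝ) (hab : b < a)
    (hrowa : ∀ i : Fin n, (i : ℕ) < m → ∑ j, M i j = a)
    (hroweq : ∀ i i' : Fin n, m ≤ (i : ℕ) → m ≤ (i' : ℕ) → ∀ j, M i j = M i' j)
    (hrowb : ∀ i : Fin n, m ≤ (i : ℕ) → ∑ j, M i j = b)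
    (v : Fin n → ℝ) (hv : ∀ i, 0 < v i)
    (heig : M.mulVec v = specRad (M.map (Complex.ofReal ·)) • v) :
    ∀ r s : Fin n, (r : ℕ) < m → m ≤ (s : ℕ) → v s < v r :=
  stmt13_general M hpos a b hab hrowa hroweq hrowb v hv heig
end

section
/- Let M be an n×n matrix with positive real entries, ρ its spectral radius, and v a positive eigenvector of M for ρ. Suppose indices r, s, t with s < t satisfy (M[r,t] - M[r,s])·(v_s - v_t) > 0. Then the matrix L obtained from M by swapping the entries in positions (r,s) and (r,t) satisfies ρ(L) > ρ(M). -/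
/-!
Swapping the two entries changes only row `r` of `M v`, raising it by
`(M r t - M r s) * (v s - v t) > 0`; so `L v ≥ ρ(M) v` with strict inequality in row `r`.
Since `L` is positive, `u = L v` then satisfies `L u > ρ(M) u` in every row, hence
`L u ≥ (ρ(M) + ε) u` for some `ε > 0`. Iterating gives `‖L ^ k‖ ≥ C (ρ(M) + ε) ^ k`, and
Gelfand's formula turns this into `ρ(L) ≥ ρ(M) + ε`.
-/

open Filter Topology Matrix

section BanachAlgebra

variable {A : Type*} [NormedRing A] [NormedAlgebra ℂ A] [CompleteSpace A]

theorem ofReal_le_spectralRadius_of_mul_pow_le_norm_pow (a : A) {C τ : ℝ} (hC : 0 < C)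
    (hτ : 0 ≤ τ) (h : ∀ k : ℕ, C * τ ^ k ≤ ‖a ^ k‖) :
    ENNReal.ofReal τ ≤ spectralRadius ℂ a := by
  have hroot : Tendsto (fun k : ℕ => (C * τ ^ k) ^ (1 / k : ℝ)) atTop (𝓝 τ) := by
    have hC_root : Tendsto (fun k : ℕ => C ^ (1 / k : ℝ)) atTop (𝓝 1) := by
      simpa using tendsto_const_nhds.rpow tendsto_one_div_atTop_nhds_zero_nat (.inl hC.ne')
    refine (one_mul τ ▸ hC_root.mul_const τ).congr' ?_
    filter_upwards [eventually_ne_atTop 0] with k hk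
    rw [Real.mul_rpow hC.le (by positivity), one_div, Real.pow_rpow_inv_natCast hτ hk]
  refine le_of_tendsto_of_tendsto' (ENNReal.tendsto_ofReal hroot)
    (spectrum.pow_nnnorm_pow_one_div_tendsto_nhds_spectralRadius a) fun k => ?_
  rw [← ENNReal.ofReal_rpow_of_nonneg (by positivity) (by positivity)]
  refine ENNReal.rpow_le_rpow ((ENNReal.ofReal_le_ofReal (h k)).trans_eq ?_) (by positivity)
  rw [← coe_nnnorm, ENNReal.ofReal_coe_nnreal]

end BanachAlgebra

theorem exists_pos_add_mul_le_of_mul_lt {ι : Type*} [Finite ι] {u y : ι → ℝ} {τ : ℝ}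
    (h : ∀ i, τ * u i < y i) : ∃ ε > 0, ∀ i, (τ + ε) * u i ≤ y i := by
  have hnear : ∀ᶠ ε in 𝓝 (0 : ℝ), ∀ i, (τ + ε) * u i < y i :=
    eventually_all.2 fun i => ContinuousAt.eventually_lt (by fun_prop) continuousAt_const
      (by simpa using h i)
  obtain ⟨ε, hε, hε_pos⟩ := ((hnear.filter_mono nhdsWithin_le_nhds).and
    (self_mem_nhdsWithin : ∀ᶠ ε in 𝓝[>] (0 : ℝ), 0 < ε)).exists
  exact ⟨ε, hε_pos, fun i => (hε i).le⟩

section EntrywiseOrder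

variable {ι : Type*} [Fintype ι]

theorem Matrix.mulVec_mono_of_nonneg {N : Matrix ι ι ℝ} (hN : ∀ i j, 0 ≤ N i j) {x y : ι → ℝ}
    (hxy : x ≤ y) : N *ᵥ x ≤ N *ᵥ y := fun i =>
  Finset.sum_le_sum fun j _ => mul_le_mul_of_nonneg_left (hxy j) (hN i j)

theorem Matrix.strongLT_mulVec_of_pos {N : Matrix ι ι ℝ} (hN : ∀ i j, 0 < N i j) {x : ι → ℝ}
    (hx : 0 < x) : StrongLT 0 (N *ᵥ x) := fun i => by
  obtain ⟨hx0, j, hj⟩ := Pi.lt_def.1 hx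
  exact Finset.sum_pos' (fun k _ => mul_nonneg (hN i k).le (hx0 k))
    ⟨j, Finset.mem_univ j, mul_pos (hN i j) hj⟩

theorem Matrix.pow_smul_le_pow_mulVec [DecidableEq ι] {N : Matrix ι ι ℝ}
    (hN : ∀ i j, 0 ≤ N i j) {τ : ℝ} (hτ : 0 ≤ τ) {w : ι → ℝ} (h : τ • w ≤ N *ᵥ w) (k : ℕ) :
    τ ^ k • w ≤ (N ^ k) *ᵥ w := by
  induction k with
  | zero => simp
  | succ k ih =>
    calc τ ^ (k + 1) • w = τ ^ k • (τ • w) := by rw [pow_succ, mul_smul]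
      _ ≤ τ ^ k • (N *ᵥ w) := smul_le_smul_of_nonneg_left h (pow_nonneg hτ k)
      _ = N *ᵥ (τ ^ k • w) := (mulVec_smul N _ w).symm
      _ ≤ N *ᵥ ((N ^ k) *ᵥ w) := mulVec_mono_of_nonneg hN ih
      _ = (N ^ (k + 1)) *ᵥ w := by rw [pow_succ', mulVec_mulVec]

end EntrywiseOrder

section SpecRad

-- `spectrum` does not depend on the norm; the `ℓ∞` operator norm is just a convenient Banach one.
attribute [local instance] Matrix.linftyOpNormedAddCommGroup Matrix.linftyOpNormedRing
  Matrix.linftyOpNormedAlgebra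

variable {n : ℕ}

theorem specRad_nonneg (A : Matrix (Fin n) (Fin n) ℂ) : 0 ≤ specRad A :=
  Real.sSup_nonneg <| by rintro _ ⟨z, -, rfl⟩; exact norm_nonneg z

theorem ofReal_specRad (A : Matrix (Fin n) (Fin n) ℂ) :
    ENNReal.ofReal (specRad A) = spectralRadius ℂ A := by
  rcases (spectrum ℂ A).eq_empty_or_nonempty with hσ | hσ
  · simp [specRad, spectralRadius, hσ]
  obtain ⟨z, hz, hz_max⟩ := spectrum.exists_nnnorm_eq_spectralRadius_of_nonempty hσ
  have hgreatest : IsGreatest ((fun z : ℂ => ‖z‖) '' spectrum ℂ A) ‖z‖ := by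
    refine ⟨⟨z, hz, rfl⟩, ?_⟩
    rintro _ ⟨y, hy, rfl⟩
    have hy_le : (‖y‖₊ : ENNReal) ≤ spectralRadius ℂ A :=
      le_iSup₂ (f := fun y _ => (‖y‖₊ : ENNReal)) y hy
    rw [← hz_max, ENNReal.coe_le_coe] at hy_le
    exact hy_le
  rw [specRad, hgreatest.csSup_eq, ← hz_max, ← coe_nnnorm, ENNReal.ofReal_coe_nnreal]

theorem linfty_opNorm_map_ofReal (N : Matrix (Fin n) (Fin n) ℝ) :
    ‖N.map (Complex.ofReal ·)‖ = ‖N‖ := by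
  simp [linfty_opNorm_def]

theorem le_specRad_of_smul_le_mulVec {N : Matrix (Fin n) (Fin n) ℝ} (hN : ∀ i j, 0 ≤ N i j)
    {w : Fin n → ℝ} (hw : 0 < w) {τ : ℝ} (h : τ • w ≤ N *ᵥ w) :
    τ ≤ specRad (N.map (Complex.ofReal ·)) := by
  rcases lt_or_ge τ 0 with hτ | hτ
  · exact hτ.le.trans (specRad_nonneg _)
  obtain ⟨i, hi⟩ := (Pi.lt_def.1 hw).2
  have hle_norm : ∀ x : Fin n → ℝ, x i ≤ ‖x‖ := fun x =>
    (le_abs_self _).trans (norm_le_pi_norm x i)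
  have hw_norm : 0 < ‖w‖ := hi.trans_le (hle_norm w)
  rw [← ENNReal.ofReal_le_ofReal_iff (specRad_nonneg _), ofReal_specRad]
  refine ofReal_le_spectralRadius_of_mul_pow_le_norm_pow _ (div_pos hi hw_norm) hτ fun k => ?_
  have hmap : (N.map (Complex.ofReal ·)) ^ k = (N ^ k).map (Complex.ofReal ·) :=
    (Matrix.map_pow N Complex.ofRealHom k).symm
  rw [hmap, linfty_opNorm_map_ofReal, div_mul_eq_mul_div, div_le_iff₀ hw_norm]
  calc w i * τ ^ k = (τ ^ k • w) i := by simp [mul_comm]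
    _ ≤ ((N ^ k) *ᵥ w) i := pow_smul_le_pow_mulVec hN hτ h k i
    _ ≤ ‖(N ^ k) *ᵥ w‖ := hle_norm _
    _ ≤ ‖N ^ k‖ * ‖w‖ := linfty_opNorm_mulVec _ _

theorem lt_specRad_of_smul_lt_mulVec {N : Matrix (Fin n) (Fin n) ℝ} (hN : ∀ i j, 0 < N i j)
    {w : Fin n → ℝ} (hw : 0 ≤ w) {τ : ℝ} (h : τ • w < N *ᵥ w) :
    τ < specRad (N.map (Complex.ofReal ·)) := by
  have hw_pos : 0 < w := hw.lt_of_ne (by rintro rfl; simp at h)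
  obtain ⟨-, j, -⟩ := Pi.lt_def.1 hw_pos
  have : Nonempty (Fin n) := ⟨j⟩
  set u := N *ᵥ w
  -- `N u - τ u = N (N w - τ w)` with `N w - τ w ≥ 0` nonzero, so `u` gains strictly in every row.
  have hgain : ∀ i, τ * u i < (N *ᵥ u) i := fun i => by
    have := strongLT_mulVec_of_pos hN (sub_pos.2 h) i
    rwa [mulVec_sub, mulVec_smul, Pi.sub_apply, Pi.smul_apply, smul_eq_mul, Pi.zero_apply,
      sub_pos] at this
  obtain ⟨ε, hε, hε_le⟩ := exists_pos_add_mul_le_of_mul_lt hgain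
  calc τ < τ + ε := lt_add_of_pos_right τ hε
    _ ≤ _ := le_specRad_of_smul_le_mulVec (fun i j => (hN i j).le)
      (lt_of_strongLT (strongLT_mulVec_of_pos hN hw_pos)) hε_le

end SpecRad

namespace Matrix

variable {m k R : Type*} [DecidableEq m] [DecidableEq k]

def swapInRow (M : Matrix m k R) (r : m) (s t : k) : Matrix m k R :=
  of fun i j => if i = r ∧ j = s then M r t else if i = r ∧ j = t then M r s else M i j

theorem swapInRow_eq_add_single [AddCommGroup R] (M : Matrix m k R) (r : m) (s t : k) :
    M.swapInRow r s t = M + single r s (M r t - M r s) + single r t (M r s - M r t) := by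
  ext i j
  simp only [swapInRow, of_apply, add_apply, single_apply]
  split_ifs <;> grind

theorem swapInRow_mulVec [Fintype k] [CommRing R] (M : Matrix m k R) (r : m) (s t : k)
    (v : k → R) :
    M.swapInRow r s t *ᵥ v = M *ᵥ v + Pi.single r ((M r t - M r s) * (v s - v t)) := by
  rw [swapInRow_eq_add_single, add_mulVec, add_mulVec, single_mulVec, single_mulVec, add_assoc]
  congr 1
  rw [← Function.update_add, zero_add]
  congr 1
  ring

end Matrix

theorem stmt14_general {n : ℕ} (M : Matrix (Fin n) (Fin n) ℝ) (hpos : ∀ i j, 0 < M i j)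
    (v : Fin n → ℝ) (hv : ∀ i, 0 < v i)
    (heig : M.mulVec v = specRad (M.map (Complex.ofReal ·)) • v)
    (r s t : Fin n)
    (h : 0 < (M r t - M r s) * (v s - v t)) :
    specRad (M.map (Complex.ofReal ·)) <
      specRad ((Matrix.of fun i j =>
        if i = r ∧ j = s then M r t
        else if i = r ∧ j = t then M r s
        else M i j).map (Complex.ofReal ·)) := by
  have hL : ∀ i j, 0 < M.swapInRow r s t i j := fun i j => by
    simp only [Matrix.swapInRow, Matrix.of_apply]
    split_ifs <;> exact hpos _ _
  have hgain : specRad (M.map (Complex.ofReal ·)) • v < M.swapInRow r s t *ᵥ v := by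
    rw [← heig, Matrix.swapInRow_mulVec]
    exact lt_add_of_pos_right _ (Pi.single_pos.2 h)
  exact lt_specRad_of_smul_lt_mulVec hL (fun i => (hv i).le) hgain

theorem stmt14 {n : ℕ} (M : Matrix (Fin n) (Fin n) ℝ) (hpos : ∀ i j, 0 < M i j)
    (v : Fin n → ℝ) (hv : ∀ i, 0 < v i)
    (heig : M.mulVec v = specRad (M.map (Complex.ofReal ·)) • v)
    (r s t : Fin n) (hst : s < t)
    (h : 0 < (M r t - M r s) * (v s - v t)) :
    specRad (M.map (Complex.ofReal ·)) <
      specRad ((Matrix.of fun i j =>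
        if i = r ∧ j = s then M r t
        else if i = r ∧ j = t then M r s
        else M i j).map (Complex.ofReal ·)) :=
  stmt14_general M hpos v hv heig r s t h
end

section
/- If M and M' are n×n matrices with positive real entries such that M' ≥ M entrywise and M' ≠ M, then the spectral radius of M' is strictly greater than the spectral radius of M. -/
/-!
By Gelfand's formula `ρ(A) = lim ‖A ^ k‖ ^ (1 / k)`, and since the `ℓ∞` operator norm is monotone
on entrywise nonnegative matrices, the spectral radius is monotone on them. Write `M' = M + D`
with `D ≥ 0` and `D i₀ j₀ > 0`. Every entry of `M D M` is positive, so `M' ^ 3 ≥ M ^ 3 + M D M`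
dominates `c • M ^ 3` entrywise for some `c > 1`. Hence
`ρ(M') ^ 3 = ρ(M' ^ 3) ≥ c ρ(M ^ 3) = c ρ(M) ^ 3`, and `ρ(M) > 0` because `M` dominates a
positive multiple of the all-ones matrix, which has the eigenvalue `n`.
-/

open Filter Topology ENNReal NNReal

-- The `ℓ∞` operator norm makes square matrices a complex Banach algebra whose norm is
-- monotone on entrywise nonnegative matrices.
attribute [local instance] Matrix.linftyOpNormedRing Matrix.linftyOpNormedAlgebra

theorem exists_pos_mul_le_of_forall_pos {α : Type*} [Finite α] {f : α → ℝ}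
    (hf : ∀ x, 0 < f x) (g : α → ℝ) : ∃ ε > 0, ∀ x, ε * g x ≤ f x := by
  have hsmall : ∀ᶠ ε in 𝓝[>] (0 : ℝ), ∀ x, ε * g x ≤ f x := by
    refine eventually_all.2 fun x => ?_
    have hlim : Tendsto (fun ε : ℝ => ε * g x) (𝓝[>] 0) (𝓝 0) :=
      ((continuous_mul_const (g x)).tendsto' 0 0 (zero_mul _)).mono_left nhdsWithin_le_nhds
    exact hlim.eventually (eventually_le_nhds (hf x))
  exact (hsmall.and self_mem_nhdsWithin).exists.imp fun ε h => ⟨h.2, h.1⟩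

namespace spectrum

variable {A : Type*} [NormedRing A] [NormedAlgebra ℂ A] [CompleteSpace A] [Nontrivial A]

theorem spectralRadius_pow (a : A) (k : ℕ) :
    spectralRadius ℂ (a ^ k) = spectralRadius ℂ a ^ k := by
  refine le_antisymm ?_ (spectralRadius_pow_le' a k)
  rw [spectralRadius, spectrum.map_pow, iSup_image]
  refine iSup₂_le fun z hz => ?_
  rw [nnnorm_pow, ENNReal.coe_pow]
  exact pow_le_pow_left' (le_iSup₂ (f := fun z (_ : z ∈ spectrum ℂ a) => (‖z‖₊ : ℝ≥0∞)) z hz) k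

theorem spectralRadius_smul (c : ℂ) (a : A) :
    spectralRadius ℂ (c • a) = ‖c‖₊ * spectralRadius ℂ a := by
  rw [spectralRadius, spectrum.smul_eq_smul c a (spectrum.nonempty a), ← Set.image_smul,
    iSup_image, spectralRadius, ENNReal.mul_iSup]
  simp_rw [ENNReal.mul_iSup, nnnorm_smul, ENNReal.coe_mul]

end spectrum

namespace Matrix

section Entrywise

variable {ι R : Type*} [Fintype ι] [Semiring R] [PartialOrder R] [IsOrderedRing R]
  {A B C D : Matrix ι ι R}

theorem mul_apply_nonneg (hA : ∀ i j, 0 ≤ A i j) (hB : ∀ i j, 0 ≤ B i j) (i j : ι) :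
    0 ≤ (A * B) i j :=
  Finset.sum_nonneg fun k _ => mul_nonneg (hA i k) (hB k j)

theorem mul_apply_le_mul_apply (hA : ∀ i j, 0 ≤ A i j) (hAB : ∀ i j, A i j ≤ B i j)
    (hC : ∀ i j, 0 ≤ C i j) (hCD : ∀ i j, C i j ≤ D i j) (i j : ι) :
    (A * C) i j ≤ (B * D) i j :=
  Finset.sum_le_sum fun k _ => mul_le_mul (hAB i k) (hCD k j) (hC k j) ((hA i k).trans (hAB i k))

theorem apply_mul_apply_mul_apply_le (hA : ∀ i j, 0 ≤ A i j) (hB : ∀ i j, 0 ≤ B i j)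
    (hC : ∀ i j, 0 ≤ C i j) (i k l j : ι) : A i k * B k l * C l j ≤ (A * B * C) i j :=
  calc A i k * B k l * C l j ≤ (A * B) i l * C l j :=
        mul_le_mul_of_nonneg_right (Finset.single_le_sum (fun k _ => mul_nonneg (hA i k) (hB k l))
          (Finset.mem_univ k)) (hC l j)
    _ ≤ (A * B * C) i j :=
        Finset.single_le_sum (fun l _ => mul_nonneg (mul_apply_nonneg hA hB i l) (hC l j))
          (Finset.mem_univ l)

theorem pow_apply_le_pow_apply [DecidableEq ι] (hA : ∀ i j, 0 ≤ A i j)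
    (hAB : ∀ i j, A i j ≤ B i j) (k : ℕ) (i j : ι) : (A ^ k) i j ≤ (B ^ k) i j := by
  induction k generalizing i j with
  | zero => rfl
  | succ k ih =>
    rw [pow_succ, pow_succ]
    exact mul_apply_le_mul_apply (pow_apply_nonneg hA k) ih hA hAB i j

end Entrywise

theorem mem_spectrum_of_mulVec_eq_smul {ι K : Type*} [Fintype ι] [DecidableEq ι] [Field K]
    {A : Matrix ι ι K} {v : ι → K} {μ : K} (hv : v ≠ 0) (h : A *ᵥ v = μ • v) :
    μ ∈ spectrum K A := by
  rw [← spectrum_toLin', ← Module.End.hasEigenvalue_iff_mem_spectrum]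
  exact Module.End.hasEigenvalue_of_hasEigenvector
    ⟨Module.End.mem_eigenspace_iff.2 (by simpa using h), hv⟩

theorem map_ofReal_smul {m n : Type*} (c : ℝ) (A : Matrix m n ℝ) :
    (c • A).map Complex.ofReal = (c : ℂ) • A.map Complex.ofReal :=
  ext fun _ _ => Complex.ofReal_mul c _

variable {ι : Type*} [Fintype ι] [DecidableEq ι]

theorem map_ofReal_pow (A : Matrix ι ι ℝ) (k : ℕ) :
    (A ^ k).map Complex.ofReal = A.map Complex.ofReal ^ k :=
  Matrix.map_pow A Complex.ofRealHom k

theorem spectralRadius_ne_top [Nonempty ι] (A : Matrix ι ι ℂ) : spectralRadius ℂ A ≠ ⊤ :=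
  ((spectrum.spectralRadius_le_nnnorm A).trans_lt coe_lt_top).ne

theorem linfty_opNNNorm_map_ofReal_le {A B : Matrix ι ι ℝ} (hA : ∀ i j, 0 ≤ A i j)
    (hAB : ∀ i j, A i j ≤ B i j) : ‖A.map Complex.ofReal‖₊ ≤ ‖B.map Complex.ofReal‖₊ := by
  simp only [linfty_opNNNorm_def, map_apply, Complex.nnnorm_real]
  refine Finset.sup_mono_fun fun i _ => Finset.sum_le_sum fun j _ => ?_
  rw [← NNReal.coe_le_coe, coe_nnnorm, coe_nnnorm, Real.norm_of_nonneg (hA i j),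
    Real.norm_of_nonneg ((hA i j).trans (hAB i j))]
  exact hAB i j

theorem spectralRadius_map_ofReal_mono {A B : Matrix ι ι ℝ} (hA : ∀ i j, 0 ≤ A i j)
    (hAB : ∀ i j, A i j ≤ B i j) :
    spectralRadius ℂ (A.map Complex.ofReal) ≤ spectralRadius ℂ (B.map Complex.ofReal) := by
  refine le_of_tendsto_of_tendsto'
    (spectrum.pow_nnnorm_pow_one_div_tendsto_nhds_spectralRadius _)
    (spectrum.pow_nnnorm_pow_one_div_tendsto_nhds_spectralRadius _) fun k => ?_
  rw [← map_ofReal_pow, ← map_ofReal_pow]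
  gcongr
  exact linfty_opNNNorm_map_ofReal_le (pow_apply_nonneg hA k) (pow_apply_le_pow_apply hA hAB k)

theorem spectralRadius_map_ofReal_pos [Nonempty ι] {A : Matrix ι ι ℝ} (hA : ∀ i j, 0 < A i j) :
    0 < spectralRadius ℂ (A.map Complex.ofReal) := by
  obtain ⟨m, hm, hmA⟩ :=
    exists_pos_mul_le_of_forall_pos (f := fun p : ι × ι => A p.1 p.2) (fun p => hA p.1 p.2) 1
  set J : Matrix ι ι ℝ := of fun _ _ => m
  have hmem : ((Fintype.card ι * m : ℝ) : ℂ) ∈ spectrum ℂ (J.map Complex.ofReal) := by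
    refine mem_spectrum_of_mulVec_eq_smul (v := fun _ => 1) (by simp [funext_iff]) ?_
    ext i
    simp [J, mulVec, dotProduct]
  calc (0 : ℝ≥0∞) < ‖((Fintype.card ι * m : ℝ) : ℂ)‖₊ := by
        simpa using ⟨Fintype.card_pos, hm.ne'⟩
    _ ≤ spectralRadius ℂ (J.map Complex.ofReal) :=
      le_iSup₂ (f := fun z (_ : z ∈ spectrum ℂ (J.map Complex.ofReal)) => (‖z‖₊ : ℝ≥0∞)) _ hmem
    _ ≤ spectralRadius ℂ (A.map Complex.ofReal) :=
      spectralRadius_map_ofReal_mono (fun _ _ => hm.le) fun i j => by simpa [J] using hmA (i, j)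

theorem exists_one_lt_smul_pow_three_le {M M' : Matrix ι ι ℝ}
    (hM : ∀ i j, 0 < M i j) (hle : ∀ i j, M i j ≤ M' i j) (hne : M' ≠ M) :
    ∃ c : ℝ, 1 < c ∧ ∀ i j, (c • M ^ 3) i j ≤ (M' ^ 3) i j := by
  obtain ⟨i₀, j₀, hlt⟩ : ∃ i j, M i j < M' i j := by
    by_contra! h
    exact hne (ext fun i j => le_antisymm (h i j) (hle i j))
  have hM₀ : ∀ i j, 0 ≤ M i j := fun i j => (hM i j).le
  have hM' : ∀ i j, 0 ≤ M' i j := fun i j => (hM₀ i j).trans (hle i j)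
  set D := M' - M
  have hD : ∀ i j, 0 ≤ D i j := fun i j => sub_nonneg.2 (hle i j)
  -- The path `i → i₀ → j₀ → j` picks up the gap `D i₀ j₀`: this is why cubes are taken.
  have hMDM : ∀ i j, 0 < (M * D * M) i j := fun i j =>
    (mul_pos (mul_pos (hM i i₀) (sub_pos.2 hlt)) (hM j₀ j)).trans_le
      (apply_mul_apply_mul_apply_le hM₀ hD hM₀ i i₀ j₀ j)
  obtain ⟨ε, hε, hεD⟩ := exists_pos_mul_le_of_forall_pos
    (f := fun p : ι × ι => (M * D * M) p.1 p.2) (fun p => hMDM p.1 p.2) fun p => (M ^ 3) p.1 p.2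
  have hsplit : M * M' * M = M ^ 3 + M * D * M := by
    simp only [D, mul_sub, sub_mul, pow_succ, pow_zero, one_mul]
    abel
  refine ⟨1 + ε, lt_add_of_pos_right 1 hε, fun i j => ?_⟩
  calc ((1 + ε) • M ^ 3) i j = (M ^ 3) i j + ε * (M ^ 3) i j := by
        rw [smul_apply, smul_eq_mul]; ring
    _ ≤ (M ^ 3) i j + (M * D * M) i j := add_le_add le_rfl (hεD (i, j))
    _ = (M * M' * M) i j := by rw [hsplit, add_apply]
    _ ≤ (M' * M' * M') i j :=
        mul_apply_le_mul_apply (mul_apply_nonneg hM₀ hM')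
          (mul_apply_le_mul_apply hM₀ hle hM' fun _ _ => le_rfl) hM₀ hle i j
    _ = (M' ^ 3) i j := by rw [pow_succ, pow_two]

theorem spectralRadius_map_ofReal_lt {M M' : Matrix ι ι ℝ} (hM : ∀ i j, 0 < M i j)
    (hle : ∀ i j, M i j ≤ M' i j) (hne : M' ≠ M) :
    spectralRadius ℂ (M.map Complex.ofReal) < spectralRadius ℂ (M'.map Complex.ofReal) := by
  have : Nonempty ι := not_isEmpty_iff.1 fun _ => hne (Subsingleton.elim _ _)
  obtain ⟨c, hc, hgain⟩ := exists_one_lt_smul_pow_three_le hM hle hne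
  set ρ := spectralRadius ℂ (M.map Complex.ofReal)
  set ρ' := spectralRadius ℂ (M'.map Complex.ofReal)
  have hρ : 0 < ρ := spectralRadius_map_ofReal_pos hM
  have hcM : ∀ i j, 0 ≤ (c • M ^ 3) i j := fun i j =>
    mul_nonneg (by positivity) (pow_apply_nonneg (fun i j => (hM i j).le) 3 i j)
  have hc' : (1 : ℝ≥0∞) < ‖(c : ℂ)‖₊ := by
    rw [Complex.nnnorm_real, one_lt_coe_iff, ← NNReal.coe_lt_coe, coe_nnnorm,
      Real.norm_of_nonneg (by positivity)]
    exact_mod_cast hc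
  have key : ‖(c : ℂ)‖₊ * ρ ^ 3 ≤ ρ' ^ 3 :=
    calc ‖(c : ℂ)‖₊ * ρ ^ 3 = spectralRadius ℂ ((c • M ^ 3).map Complex.ofReal) := by
          rw [map_ofReal_smul, spectrum.spectralRadius_smul, map_ofReal_pow,
            spectrum.spectralRadius_pow]
      _ ≤ spectralRadius ℂ ((M' ^ 3).map Complex.ofReal) :=
          spectralRadius_map_ofReal_mono hcM hgain
      _ = ρ' ^ 3 := by rw [map_ofReal_pow, spectrum.spectralRadius_pow]
  refine lt_of_pow_lt_pow_left' 3 (lt_of_lt_of_le ?_ key)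
  simpa using ENNReal.mul_lt_mul_left (pow_ne_zero 3 hρ.ne')
    (pow_ne_top (spectralRadius_ne_top _)) hc'

end Matrix

theorem specRad_eq_toReal_spectralRadius {n : ℕ} [Nonempty (Fin n)]
    (A : Matrix (Fin n) (Fin n) ℂ) : specRad A = (spectralRadius ℂ A).toReal := by
  obtain ⟨z, hz, hρ⟩ := spectrum.exists_nnnorm_eq_spectralRadius A
  rw [← hρ, ENNReal.coe_toReal, coe_nnnorm]
  refine IsGreatest.csSup_eq ⟨⟨z, hz, rfl⟩, ?_⟩
  rintro _ ⟨w, hw, rfl⟩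
  have : (‖w‖₊ : ℝ≥0∞) ≤ ‖z‖₊ :=
    hρ ▸ le_iSup₂ (f := fun w (_ : w ∈ spectrum ℂ A) => (‖w‖₊ : ℝ≥0∞)) w hw
  exact_mod_cast this

theorem stmt16_general {n : ℕ} (M M' : Matrix (Fin n) (Fin n) ℝ)
    (hpos : ∀ i j, 0 < M i j)
    (hle : ∀ i j, M i j ≤ M' i j) (hne : M' ≠ M) :
    specRad (M.map (Complex.ofReal ·)) < specRad (M'.map (Complex.ofReal ·)) := by
  have : Nonempty (Fin n) := not_isEmpty_iff.1 fun _ => hne (Subsingleton.elim _ _)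
  rw [specRad_eq_toReal_spectralRadius, specRad_eq_toReal_spectralRadius]
  exact ENNReal.toReal_strict_mono (Matrix.spectralRadius_ne_top _)
    (Matrix.spectralRadius_map_ofReal_lt hpos hle hne)

theorem stmt16 {n : ℕ} (M M' : Matrix (Fin n) (Fin n) ℝ)
    (hpos : ∀ i j, 0 < M i j) (hpos' : ∀ i j, 0 < M' i j)
    (hle : ∀ i j, M i j ≤ M' i j) (hne : M' ≠ M) :
    specRad (M.map (Complex.ofReal ·)) < specRad (M'.map (Complex.ofReal ·)) :=
  stmt16_general M M' hpos hle hne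
end

section
/- The spectral radius of the 2×2 matrix [[1, 2], [1, 1]] is 1 + √2, the spectral radius of [[2, 1], [1, 1]] is (3 + √5)/2, and (3 + √5)/2 > 1 + √2; yet the spectral radius of the 3×3 matrix [[1,2,1],[1,1,3],[1,1,3]] is strictly greater than the spectral radius of [[2,1,1],[1,1,3],[1,1,3]]. -/
open Matrix Polynomial

lemma specRad_eq_of_eval_charpoly {n : ℕ} (M : Matrix (Fin n) (Fin n) ℂ) (k : ℕ) {a b : ℝ}
    (hba : |b| ≤ a) (hM : ∀ z : ℂ, M.charpoly.eval z = z ^ k * ((z - a) * (z - b))) :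
    specRad M = a := by
  have ha : 0 ≤ a := (abs_nonneg b).trans hba
  refine IsGreatest.csSup_eq ⟨⟨a, ?_, by simp [ha]⟩, ?_⟩
  · simp [mem_spectrum_iff_isRoot_charpoly, hM]
  · rintro _ ⟨z, hz, rfl⟩
    rw [mem_spectrum_iff_isRoot_charpoly, IsRoot, hM, mul_eq_zero, mul_eq_zero, sub_eq_zero,
      sub_eq_zero] at hz
    rcases hz with hz | rfl | rfl
    · simpa [eq_zero_of_pow_eq_zero hz] using ha
    · simp [abs_of_nonneg ha]
    · simpa using hba

lemma specRad_one_two_one_one :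
    specRad ((!![1, 2; 1, 1] : Matrix (Fin 2) (Fin 2) ℝ).map (Complex.ofReal ·)) = 1 + √2 := by
  refine specRad_eq_of_eval_charpoly _ 0 (b := 1 - √2) ?_ fun z => ?_
  · rw [abs_le]; constructor <;> linarith [Real.sqrt_nonneg 2]
  · have hs : ((√2 : ℝ) : ℂ) ^ 2 = 2 := by norm_cast; simp
    simp [eval_charpoly, det_fin_two]
    linear_combination hs

lemma specRad_two_one_one_one :
    specRad ((!![2, 1; 1, 1] : Matrix (Fin 2) (Fin 2) ℝ).map (Complex.ofReal ·))
      = (3 + √5) / 2 := by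
  refine specRad_eq_of_eval_charpoly _ 0 (b := (3 - √5) / 2) ?_ fun z => ?_
  · rw [abs_le]; constructor <;> linarith [Real.sqrt_nonneg 5]
  · have hs : ((√5 : ℝ) : ℂ) ^ 2 = 5 := by norm_cast; simp
    simp [eval_charpoly, det_fin_two]
    linear_combination hs / 4

lemma specRad_bordered_one_two_one_one :
    specRad ((!![1, 2, 1; 1, 1, 3; 1, 1, 3] : Matrix (Fin 3) (Fin 3) ℝ).map (Complex.ofReal ·))
      = (5 + √21) / 2 := by
  refine specRad_eq_of_eval_charpoly _ 1 (b := (5 - √21) / 2) ?_ fun z => ?_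
  · rw [abs_le]; constructor <;> linarith [Real.sqrt_nonneg 21]
  · have hs : ((√21 : ℝ) : ℂ) ^ 2 = 21 := by norm_cast; simp
    simp [eval_charpoly, det_fin_three]
    linear_combination z / 4 * hs

lemma specRad_bordered_two_one_one_one :
    specRad ((!![2, 1, 1; 1, 1, 3; 1, 1, 3] : Matrix (Fin 3) (Fin 3) ℝ).map (Complex.ofReal ·))
      = 3 + √3 := by
  refine specRad_eq_of_eval_charpoly _ 1 (b := 3 - √3) ?_ fun z => ?_
  · rw [abs_le]; constructor <;> linarith [Real.sqrt_nonneg 3]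
  · have hs : ((√3 : ℝ) : ℂ) ^ 2 = 3 := by norm_cast; simp
    simp [eval_charpoly, det_fin_three]
    linear_combination z * hs

theorem stmt17 :
    specRad ((!![1, 2; 1, 1] : Matrix (Fin 2) (Fin 2) ℝ).map (Complex.ofReal ·))
      = 1 + Real.sqrt 2 ∧
    specRad ((!![2, 1; 1, 1] : Matrix (Fin 2) (Fin 2) ℝ).map (Complex.ofReal ·))
      = (3 + Real.sqrt 5) / 2 ∧
    1 + Real.sqrt 2 < (3 + Real.sqrt 5) / 2 ∧
    specRad ((!![2, 1, 1; 1, 1, 3; 1, 1, 3] : Matrix (Fin 3) (Fin 3) ℝ).map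
        (Complex.ofReal ·)) <
      specRad ((!![1, 2, 1; 1, 1, 3; 1, 1, 3] : Matrix (Fin 3) (Fin 3) ℝ).map
        (Complex.ofReal ·)) := by
  have h2 : √2 < 3 / 2 := by rw [Real.sqrt_lt' (by norm_num)]; norm_num
  have h3 : √3 < 7 / 4 := by rw [Real.sqrt_lt' (by norm_num)]; norm_num
  have h5 : 2 < √5 := by rw [Real.lt_sqrt (by norm_num)]; norm_num
  have h21 : 9 / 2 < √21 := by rw [Real.lt_sqrt (by norm_num)]; norm_num
  refine ⟨specRad_one_two_one_one, specRad_two_one_one_one, by linarith, ?_⟩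
  rw [specRad_bordered_two_one_one_one, specRad_bordered_one_two_one_one]
  linarith
end
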